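/- arXiv:0808.2837 — 2 statements merged into one kernel-verified Lean document; each statement's English description precedes it below -/
import Mathlib

section
/- Let ℓ be an integer greater than 1 and let C be a code of length 2ℓ over an alphabet of size q ≥ 2. Suppose that the difference of any two distinct codewords of C is not an ℓ-burst (so C has a decoder that detects any single ℓ-burst error) and that C has an (ℓ,ℓ)-burst list decoder. Then |C| < ℓ · q^{ℓ−1}. -/
/-- A word `e ∈ F^n` is a `τ`-burst if its support is contained in `τ`
consecutive positions (equivalently, `e = 0` or the first and last nonzero
indexes `i ≤ j` satisfy `j - i < τ`). -/
def IsBurst {F : Type*} [Zero F] {n : ℕ} (τ : ℕ) (e : Fin n → F) : Prop :=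
  ∃ a : ℕ, ∀ j : Fin n, e j ≠ 0 → a ≤ (j : ℕ) ∧ (j : ℕ) < a + τ

/-- A decoder `D` (returning lists, i.e. finite sets, of codewords) corrects any
single `τ`-burst error. -/
def Corrects {F : Type*} [AddCommGroup F] {n : ℕ}
    (D : (Fin n → F) → Finset (Fin n → F)) (C : Set (Fin n → F)) (τ : ℕ) : Prop :=
  ∀ c ∈ C, ∀ e : Fin n → F, IsBurst τ e → c ∈ D (c + e)

/-- A decoder `D` detects any single `τ`-burst error: on input `c + e` it
returns `{c}` if `e = 0` and `∅` otherwise. -/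
def Detects {F : Type*} [AddCommGroup F] {n : ℕ}
    (D : (Fin n → F) → Finset (Fin n → F)) (C : Set (Fin n → F)) (τ : ℕ) : Prop :=
  ∀ c ∈ C, ∀ e : Fin n → F, IsBurst τ e →
    (e = 0 → D (c + e) = {c}) ∧ (e ≠ 0 → D (c + e) = ∅)

/-- `C` has an `(ℓ,τ)`-burst list decoder: a decoder with lists of codewords of
size at most `ℓ` that corrects any single `τ`-burst error. -/
def HasBurstListDecoder {F : Type*} [AddCommGroup F] {n : ℕ}
    (C : Set (Fin n → F)) (ℓ τ : ℕ) : Prop :=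
  ∃ D : (Fin n → F) → Finset (Fin n → F),
    (∀ y, (D y : Set (Fin n → F)) ⊆ C) ∧ (∀ y, (D y).card ≤ ℓ) ∧ Corrects D C τ

/-- `C` has a decoder detecting any single `τ`-burst error. -/
def HasBurstDetector {F : Type*} [AddCommGroup F] {n : ℕ}
    (C : Set (Fin n → F)) (τ : ℕ) : Prop :=
  ∃ D : (Fin n → F) → Finset (Fin n → F),
    (∀ y, (D y : Set (Fin n → F)) ⊆ C) ∧ Detects D C τ



/-!
Call distinct codewords `e 0, …, e k` a chain if each `e a` agrees with `e k` on the first `a`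
coordinates and with `e (a + 1)` from coordinate `ℓ + a + 1` on. Every member of a chain of
length `k ≤ ℓ` is an `ℓ`-burst away from the word that copies `e k` on the first `ℓ` coordinates
and `e 0` on the others, so the list decoder forces `k < ℓ`. Let the level of a codeword be the
length of the longest chain ending at it. If two distinct codewords agree outside the window
`[k, k + ℓ]` and the first ends a chain of length `k`, burst separation lets the second be
appended to that chain; so codewords of level `k` are determined by their `ℓ - 1` coordinates
outside the window, and each of the `ℓ` levels has at most `q ^ (ℓ - 1)` members. The bound is
strict because a codeword of level `1` leaves its outside-window pattern unused at level `0`.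
-/

open Finset

section

variable {F : Type*} {n : ℕ}

theorem isBurst_sub_of_eqOn [AddGroup F] {τ : ℕ} {x y : Fin n → F} (a : ℕ)
    (hpre : Set.EqOn x y {j | (j : ℕ) < a}) (hsuf : Set.EqOn x y {j | τ + a ≤ (j : ℕ)}) :
    IsBurst τ (x - y) := by
  refine ⟨a, fun j hj => ⟨?_, ?_⟩⟩ <;> by_contra h <;> apply hj
  · simp [hpre (show (j : ℕ) < a by omega)]
  · simp [hsuf (show τ + a ≤ (j : ℕ) by omega)]

theorem HasBurstListDecoder.card_le [AddCommGroup F] {C : Set (Fin n → F)} {L τ : ℕ}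
    (hD : HasBurstListDecoder C L τ) {s : Finset (Fin n → F)} (hsC : (s : Set (Fin n → F)) ⊆ C)
    (y : Fin n → F) (hs : ∀ c ∈ s, IsBurst τ (y - c)) : #s ≤ L := by
  obtain ⟨D, -, hcard, hcorr⟩ := hD
  refine (card_le_card fun c hc => ?_).trans (hcard y)
  simpa using hcorr c (hsC hc) (y - c) (hs c hc)

theorem card_le_pow_of_eqOn_imp_eq {ι : Type*} [Fintype F] {s : Finset (ι → F)} (S : Finset ι)
    (h : ∀ x ∈ s, ∀ y ∈ s, Set.EqOn x y S → x = y) : #s ≤ Fintype.card F ^ #S := by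
  classical
  calc #s ≤ #(univ : Finset (S → F)) :=
        card_le_card_of_injOn (fun x j => x j) (fun _ _ => mem_univ _)
          fun x hx y hy hxy => h x hx y hy fun j hj => congrFun hxy ⟨j, hj⟩
    _ = Fintype.card F ^ #S := by simp

def outsideWindow (n ℓ k : ℕ) : Finset (Fin n) := {j | (j : ℕ) < k ∨ ℓ + k + 1 ≤ (j : ℕ)}

theorem coe_outsideWindow (ℓ k : ℕ) : (outsideWindow n ℓ k : Set (Fin n)) =
    {j : Fin n | (j : ℕ) < k} ∪ {j : Fin n | ℓ + k + 1 ≤ (j : ℕ)} := by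
  ext; simp [outsideWindow]

theorem card_outsideWindow {ℓ k : ℕ} (h : k + ℓ + 1 ≤ n) :
    #(outsideWindow n ℓ k) = n - (ℓ + 1) := by
  have hcompl : outsideWindow n ℓ k =
      (({j | (j : ℕ) < ℓ + k + 1} : Finset (Fin n)) \ ({j | (j : ℕ) < k} : Finset (Fin n)))ᶜ := by
    ext j
    simp only [outsideWindow, mem_compl, mem_sdiff, mem_filter, mem_univ, true_and]
    omega
  rw [hcompl, card_compl, card_sdiff_of_subset, Fin.card_filter_val_lt, Fin.card_filter_val_lt,
    Fintype.card_fin]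
  · omega
  · intro j
    simp only [mem_filter, mem_univ, true_and]
    omega

structure IsBurstChain (C : Set (Fin n → F)) (ℓ k : ℕ) (e : ℕ → Fin n → F) : Prop where
  mapsTo : Set.MapsTo e (Set.Iic k) C
  injOn : Set.InjOn e (Set.Iic k)
  eqOn_prefix : ∀ a ≤ k, Set.EqOn (e a) (e k) {j | (j : ℕ) < a}
  eqOn_suffix_succ : ∀ a < k, Set.EqOn (e a) (e (a + 1)) {j | ℓ + a + 1 ≤ (j : ℕ)}

namespace IsBurstChain

variable {C : Set (Fin n → F)} {ℓ k : ℕ} {e : ℕ → Fin n → F}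

theorem eqOn_suffix (h : IsBurstChain C ℓ k e) {a b : ℕ} (hab : a ≤ b) (hbk : b ≤ k) :
    Set.EqOn (e a) (e b) {j | ℓ + b ≤ (j : ℕ)} := by
  induction b, hab using Nat.le_induction with
  | base => exact Set.eqOn_refl _ _
  | succ b hab ih =>
    intro j (hj : ℓ + (b + 1) ≤ (j : ℕ))
    exact (ih (by omega) (show ℓ + b ≤ (j : ℕ) by omega)).trans (h.eqOn_suffix_succ b hbk hj)

theorem exists_isBurst_sub [AddGroup F] (h : IsBurstChain C ℓ k e) (hk : k ≤ ℓ) :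
    ∃ y, ∀ a ≤ k, IsBurst ℓ (y - e a) := by
  refine ⟨fun j => if (j : ℕ) < ℓ then e k j else e 0 j, fun a ha => isBurst_sub_of_eqOn a ?_ ?_⟩
  · intro j (hj : (j : ℕ) < a)
    simp only [if_pos (show (j : ℕ) < ℓ by omega)]
    exact (h.eqOn_prefix a ha hj).symm
  · intro j (hj : ℓ + a ≤ (j : ℕ))
    simp only [if_neg (show ¬ (j : ℕ) < ℓ by omega)]
    exact h.eqOn_suffix (Nat.zero_le a) ha hj

theorem lt_of_hasBurstListDecoder [AddCommGroup F] {L : ℕ} (h : IsBurstChain C ℓ k e)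
    (hk : k ≤ ℓ) (hD : HasBurstListDecoder C L ℓ) : k < L := by
  classical
  obtain ⟨y, hy⟩ := h.exists_isBurst_sub hk
  have hcard := hD.card_le (s := (Iic k).image e) (by simpa using h.mapsTo.image_subset) y
    (by simpa using hy)
  rwa [card_image_of_injOn (by simpa using h.injOn), Nat.card_Iic] at hcard

end IsBurstChain

def IsBurstSeparated [AddGroup F] (C : Set (Fin n → F)) (ℓ : ℕ) : Prop :=
  ∀ c₁ ∈ C, ∀ c₂ ∈ C, c₁ ≠ c₂ → ¬ IsBurst ℓ (c₁ - c₂)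

def HasBurstChain (C : Set (Fin n → F)) (ℓ k : ℕ) (c : Fin n → F) : Prop :=
  ∃ e, IsBurstChain C ℓ k e ∧ e k = c

theorem hasBurstChain_zero {C : Set (Fin n → F)} {ℓ : ℕ} {c : Fin n → F} (hc : c ∈ C) :
    HasBurstChain C ℓ 0 c :=
  ⟨fun _ => c, ⟨fun _ _ => hc, fun a ha b hb _ => by simp_all, fun _ _ _ _ => rfl,
    fun _ ha => absurd ha (Nat.not_lt_zero _)⟩, rfl⟩

theorem HasBurstChain.extend [AddGroup F] {C : Set (Fin n → F)} {ℓ : ℕ}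
    (hC : IsBurstSeparated C ℓ)
    {k : ℕ} {c c' : Fin n → F} (h : HasBurstChain C ℓ k c) (hc' : c' ∈ C) (hne : c ≠ c')
    (hagree : Set.EqOn c c' (outsideWindow n ℓ k)) : HasBurstChain C ℓ (k + 1) c' := by
  obtain ⟨e, he, rfl⟩ := h
  rw [coe_outsideWindow, Set.eqOn_union] at hagree
  obtain ⟨hpre, hsuf⟩ := hagree
  have hfresh : ∀ a ≤ k, e a ≠ c' := by
    rintro a ha rfl
    exact hC _ (he.mapsTo Set.self_mem_Iic) _ (he.mapsTo ha) hne
      (isBurst_sub_of_eqOn k hpre (he.eqOn_suffix ha le_rfl).symm)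
  set e' := Function.update e (k + 1) c'
  have hold : ∀ a ≤ k, e' a = e a := fun a ha => Function.update_of_ne (by omega) _ _
  have hnew : e' (k + 1) = c' := Function.update_self _ _ _
  refine ⟨e', ⟨?_, ?_, ?_, ?_⟩, hnew⟩
  · intro a (ha : a ≤ k + 1)
    obtain rfl | ha := Nat.le_succ_iff.1 ha |>.symm
    · rw [hnew]; exact hc'
    · rw [hold a ha]; exact he.mapsTo ha
  · intro a (ha : a ≤ k + 1) b (hb : b ≤ k + 1) hab
    obtain rfl | ha := Nat.le_succ_iff.1 ha |>.symm <;>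
      obtain rfl | hb := Nat.le_succ_iff.1 hb |>.symm
    · rfl
    · exact absurd (hnew ▸ hold b hb ▸ hab).symm (hfresh b hb)
    · exact absurd (hnew ▸ hold a ha ▸ hab) (hfresh a ha)
    · exact he.injOn ha hb (hold a ha ▸ hold b hb ▸ hab)
  · intro a (ha : a ≤ k + 1)
    rw [hnew]
    obtain rfl | ha := Nat.le_succ_iff.1 ha |>.symm
    · rw [hnew]; exact Set.eqOn_refl _ _
    · rw [hold a ha]
      exact (he.eqOn_prefix a ha).trans (hpre.mono fun j (hj : (j : ℕ) < a) => by
        show (j : ℕ) < k; omega)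
  · intro a (ha : a < k + 1)
    obtain rfl | ha := Nat.lt_succ_iff_lt_or_eq.1 ha |>.symm
    · rw [hold a le_rfl, hnew]; exact hsuf
    · rw [hold a ha.le, hold (a + 1) ha]; exact he.eqOn_suffix_succ a ha

open Classical in
noncomputable def chainLevel (C : Set (Fin n → F)) (ℓ : ℕ) (c : Fin n → F) : ℕ :=
  Nat.findGreatest (fun k => HasBurstChain C ℓ k c) ℓ

section Level

open Classical

variable {C : Set (Fin n → F)} {ℓ : ℕ}

theorem hasBurstChain_chainLevel {c : Fin n → F} (hc : c ∈ C) :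
    HasBurstChain C ℓ (chainLevel C ℓ c) c :=
  Nat.findGreatest_spec (P := (HasBurstChain C ℓ · c)) (Nat.zero_le ℓ) (hasBurstChain_zero hc)

theorem chainLevel_lt [AddCommGroup F] (hD : HasBurstListDecoder C ℓ ℓ) {c : Fin n → F}
    (hc : c ∈ C) : chainLevel C ℓ c < ℓ := by
  obtain ⟨e, he, -⟩ := hasBurstChain_chainLevel hc
  exact he.lt_of_hasBurstListDecoder (Nat.findGreatest_le ℓ) hD

theorem HasBurstChain.lt_chainLevel [AddGroup F]
    (hC : IsBurstSeparated C ℓ) {k : ℕ} {c c' : Fin n → F}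
    (h : HasBurstChain C ℓ k c) (hk : k < ℓ) (hc' : c' ∈ C) (hne : c ≠ c')
    (hagree : Set.EqOn c c' (outsideWindow n ℓ k)) : k < chainLevel C ℓ c' :=
  Nat.le_findGreatest hk (h.extend hC hc' hne hagree)

theorem card_le_of_chainLevel_eq [AddGroup F] [Fintype F]
    (hC : IsBurstSeparated C ℓ) {k : ℕ} (hk : k < ℓ)
    {s : Finset (Fin n → F)} (hsC : (s : Set (Fin n → F)) ⊆ C)
    (hs : ∀ c ∈ s, chainLevel C ℓ c = k) :
    #s ≤ Fintype.card F ^ #(outsideWindow n ℓ k) := by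
  refine card_le_pow_of_eqOn_imp_eq _ fun c hc c' hc' hagree => ?_
  by_contra hne
  exact ((hs c hc ▸ hasBurstChain_chainLevel (hsC hc)).lt_chainLevel hC hk (hsC hc') hne
    hagree).ne' (hs c' hc')

theorem card_lt_of_chainLevel_eq_zero [AddGroup F] [Fintype F]
    (hC : IsBurstSeparated C ℓ) (hℓ : 0 < ℓ)
    {s : Finset (Fin n → F)} (hsC : (s : Set (Fin n → F)) ⊆ C)
    (hs : ∀ c ∈ s, chainLevel C ℓ c = 0) {c' : Fin n → F} (hc' : c' ∈ C)
    (hc'0 : chainLevel C ℓ c' ≠ 0) :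
    #s < Fintype.card F ^ #(outsideWindow n ℓ 0) := by
  have key : ∀ x ∈ C, ∀ y ∈ s, Set.EqOn x y (outsideWindow n ℓ 0) → x = y :=
    fun x hx y hy hxy => by_contra fun hne =>
      ((hasBurstChain_zero hx).lt_chainLevel hC hℓ (hsC hy) hne hxy).ne' (hs y hy)
  calc #s < #(insert c' s) := card_lt_card (ssubset_insert fun h => hc'0 (hs c' h))
    _ ≤ _ := card_le_pow_of_eqOn_imp_eq _ fun x hx y hy hxy => by
      obtain rfl | hys := mem_insert.1 hy
      · obtain rfl | hxs := mem_insert.1 hx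
        · rfl
        · exact (key y hc' x hxs hxy.symm).symm
      · obtain rfl | hxs := mem_insert.1 hx
        exacts [key x hc' y hys hxy, key x (hsC hxs) y hys hxy]

end Level

end

theorem code_size_bound_tau_eq_ell_general (F : Type*) [AddCommGroup F] [Fintype F]
    (ℓ : ℕ) (hℓ : 1 < ℓ)
    (C : Set (Fin (2 * ℓ) → F))
    (h2 : ∀ c₁ ∈ C, ∀ c₂ ∈ C, c₁ ≠ c₂ → ¬ IsBurst ℓ (c₁ - c₂))
    (h3 : HasBurstListDecoder C ℓ ℓ) :
    C.ncard < ℓ * Fintype.card F ^ (ℓ - 1) := by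
  classical
  set q := Fintype.card F
  let L : ℕ → Finset (Fin (2 * ℓ) → F) := fun k => {c ∈ C.toFinset | chainLevel C ℓ c = k}
  have hLC : ∀ k, (L k : Set (Fin (2 * ℓ) → F)) ⊆ C := fun k c hc => by simp_all [L]
  have hLk : ∀ k, ∀ c ∈ L k, chainLevel C ℓ c = k := fun k c hc => by simp_all [L]
  have hwin : ∀ k < ℓ, #(outsideWindow (2 * ℓ) ℓ k) = ℓ - 1 := fun k hk => by
    rw [card_outsideWindow (by omega)]; omega
  have hbound : ∀ k ∈ range ℓ, #(L k) ≤ q ^ (ℓ - 1) := fun k hk =>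
    hwin k (mem_range.1 hk) ▸ card_le_of_chainLevel_eq h2 (mem_range.1 hk) (hLC k) (hLk k)
  have hstrict : ∃ k ∈ range ℓ, #(L k) < q ^ (ℓ - 1) := by
    obtain h1 | ⟨c', hc'⟩ := (L 1).eq_empty_or_nonempty
    · exact ⟨1, mem_range.2 hℓ, by rw [h1, card_empty]; positivity⟩
    · refine ⟨0, mem_range.2 (by omega), hwin 0 (by omega) ▸
        card_lt_of_chainLevel_eq_zero h2 (by omega) (hLC 0) (hLk 0) (hLC 1 hc') ?_⟩
      rw [hLk 1 c' hc']; exact one_ne_zero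
  calc C.ncard = ∑ k ∈ range ℓ, #(L k) := by
        rw [Set.ncard_eq_toFinset_card']
        exact card_eq_sum_card_fiberwise fun c hc =>
          mem_range.2 (chainLevel_lt h3 (by simpa using hc))
    _ < ∑ _k ∈ range ℓ, q ^ (ℓ - 1) := sum_lt_sum hbound hstrict
    _ = ℓ * q ^ (ℓ - 1) := by rw [sum_const, card_range, smul_eq_mul]

/-- Let `ℓ > 1` and let `C` be a code of length `2ℓ` over an
alphabet of size `q ≥ 2` such that the difference of any two distinct codewords
is not an `ℓ`-burst, and such that `C` has an `(ℓ,ℓ)`-burst list decoder. Then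
`|C| < ℓ · q^{ℓ-1}`. -/
theorem code_size_bound_tau_eq_ell (F : Type*) [AddCommGroup F] [Fintype F]
    (ℓ : ℕ) (hℓ : 1 < ℓ) (hq : 2 ≤ Fintype.card F)
    (C : Set (Fin (2 * ℓ) → F))
    (h2 : ∀ c₁ ∈ C, ∀ c₂ ∈ C, c₁ ≠ c₂ → ¬ IsBurst ℓ (c₁ - c₂))
    (h3 : HasBurstListDecoder C ℓ ℓ) :
    C.ncard < ℓ * Fintype.card F ^ (ℓ - 1) :=
  code_size_bound_tau_eq_ell_general F ℓ hℓ C h2 h3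
end

section
/- Let C be a code of length n over an alphabet of size q ≥ 2 and let ℓ and τ be positive integers such that: (1) ℓ divides τ, ℓ > 1, and 2τ ≤ n; (2) there is a decoder for C that detects any single τ-burst error; and (3) there is an (ℓ,τ)-burst list decoder for C. Then the redundancy r = n − log_q |C| of C satisfies r > (1 + 1/ℓ)·τ − log_q ℓ; equivalently, |C| < ℓ · q^{n − (1+1/ℓ)τ}. -/
section DiffersWithin

variable {α : Type*} {n : ℕ}

def DiffersWithin (c c' : Fin n → α) (s t : ℕ) : Prop :=
  ∀ j : Fin n, c j ≠ c' j → s ≤ (j : ℕ) ∧ (j : ℕ) < t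

variable {c c' c'' : Fin n → α} {s t s' t' : ℕ}

theorem DiffersWithin.refl (c : Fin n → α) (s t : ℕ) : DiffersWithin c c s t :=
  fun _ h => absurd rfl h

theorem DiffersWithin.symm (h : DiffersWithin c c' s t) : DiffersWithin c' c s t :=
  fun j hj => h j (Ne.symm hj)

theorem DiffersWithin.mono (h : DiffersWithin c c' s t) (hs : s' ≤ s) (ht : t ≤ t') :
    DiffersWithin c c' s' t' :=
  fun j hj => (h j hj).imp (hs.trans ·) (·.trans_le ht)

theorem DiffersWithin.trans (h : DiffersWithin c c' s t) (h' : DiffersWithin c' c'' s' t')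
    (hs : s ≤ s') (ht : t ≤ t') : DiffersWithin c c'' s t' := by
  intro j hj
  by_cases hc : c j = c' j
  · have := h' j (hc ▸ hj)
    omega
  · have := h j hc
    omega

theorem isBurst_sub_iff [AddGroup α] {τ : ℕ} :
    IsBurst τ (c - c') ↔ ∃ a, DiffersWithin c c' a (a + τ) := by
  simp only [IsBurst, DiffersWithin, Pi.sub_apply, sub_ne_zero]

end DiffersWithin

section Puncture

variable {α : Type*} {n : ℕ}

def puncture (s w : ℕ) (c : Fin n → α) : Fin (n - w) → α := fun i =>
  c (if (i : ℕ) < s then ⟨i, by omega⟩ else ⟨i + w, by omega⟩)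

theorem differsWithin_of_puncture_eq {s w : ℕ} (hsw : s + w ≤ n) {c c' : Fin n → α}
    (h : puncture s w c = puncture s w c') : DiffersWithin c c' s (s + w) := by
  intro j hj
  by_contra hout
  rcases Nat.lt_or_ge (j : ℕ) s with hjs | hjs
  · have := congrFun h ⟨j, by omega⟩
    simp only [puncture, hjs, if_true] at this
    exact hj this
  · have := congrFun h ⟨j - w, by omega⟩
    simp only [puncture, show ¬((j : ℕ) - w < s) by omega, if_false,
      show (j : ℕ) - w + w = j by omega] at this
    exact hj this

end Puncture

section Codes

variable {F : Type*} [AddCommGroup F] {n : ℕ} {C : Set (Fin n → F)} {τ ℓ : ℕ}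

theorem HasBurstDetector.eq_of_isBurst_sub (h : HasBurstDetector C τ) {c c' : Fin n → F}
    (hc : c ∈ C) (hc' : c' ∈ C) (hb : IsBurst τ (c' - c)) : c = c' := by
  obtain ⟨D, -, hD⟩ := h
  by_contra hne
  have hempty := (hD c hc (c' - c) hb).2 (sub_ne_zero.mpr (Ne.symm hne))
  have hsingle := (hD c' hc' 0 ⟨0, fun _ h => absurd rfl h⟩).1 rfl
  rw [add_sub_cancel] at hempty
  rw [add_zero, hempty] at hsingle
  exact Finset.singleton_ne_empty c' hsingle.symm

theorem HasBurstListDecoder.card_le_s10 (h : HasBurstListDecoder C ℓ τ) (y : Fin n → F)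
    {S : Finset (Fin n → F)} (hS : ↑S ⊆ C) (hb : ∀ c ∈ S, IsBurst τ (y - c)) : S.card ≤ ℓ := by
  obtain ⟨D, -, hDcard, hD⟩ := h
  refine (Finset.card_le_card fun c hc => ?_).trans (hDcard y)
  simpa using hD c (hS hc) (y - c) (hb c hc)

end Codes

section Chains

variable {F : Type*} {n : ℕ} (C : Set (Fin n → F)) (b τ : ℕ)

structure IsWindowChain (k : ℕ) (f : ℕ → Fin n → F) : Prop where
  mem : ∀ i ≤ k, f i ∈ C
  ne : ∀ i < k, f i ≠ f (i + 1)
  differsWithin : ∀ i < k, DiffersWithin (f i) (f (i + 1)) (i * b) ((i + 1) * b + τ)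

def HasChainTo (k : ℕ) (c : Fin n → F) : Prop :=
  ∃ f, IsWindowChain C b τ k f ∧ f k = c

variable {C b τ} {k : ℕ} {f : ℕ → Fin n → F}

theorem IsWindowChain.differsWithin_of_le (hf : IsWindowChain C b τ k f) {i j : ℕ}
    (hij : i ≤ j) (hjk : j ≤ k) : DiffersWithin (f i) (f j) (i * b) (j * b + τ) := by
  induction j, hij using Nat.le_induction with
  | base => exact DiffersWithin.refl _ _ _
  | succ j hij ih =>
    exact (ih (by omega)).trans (hf.differsWithin j (by omega))
      (Nat.mul_le_mul_right b hij) (by gcongr; omega)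

theorem IsWindowChain.injOn [AddCommGroup F] (hf : IsWindowChain C b τ k f)
    (hC : HasBurstDetector C τ) : Set.InjOn f (Set.Iic k) := by
  suffices ∀ i j, i < j → j ≤ k → f i ≠ f j by
    intro i hi j hj hfij
    by_contra hne
    rcases Nat.lt_or_gt_of_ne hne with h | h
    · exact this i j h hj hfij
    · exact this j i h hi hfij.symm
  intro i j hij hjk hfij
  have hstep := hf.differsWithin i (by omega)
  have hrest := hf.differsWithin_of_le (i := i + 1) (j := j) hij hjk
  rw [← hfij] at hrest
  -- `c_i` and `c_{i+1}` differ only inside the intersection of the two windows, a `τ`-burst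
  refine hf.ne i (by omega) (hC.eq_of_isBurst_sub (hf.mem i (by omega))
    (hf.mem (i + 1) (by omega)) ?_)
  refine isBurst_sub_iff.mpr ⟨(i + 1) * b, fun p hp => ?_⟩
  have h₁ := hstep p (Ne.symm hp)
  have h₂ := hrest p hp
  omega

def spliceEnds (f : ℕ → Fin n → F) (k τ : ℕ) : Fin n → F :=
  fun p => if (p : ℕ) < τ then f k p else f 0 p

theorem IsWindowChain.isBurst_spliceEnds_sub [AddCommGroup F] (hf : IsWindowChain C b τ k f)
    (hkb : k * b = τ) {i : ℕ} (hi : i ≤ k) : IsBurst τ (spliceEnds f k τ - f i) := by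
  refine isBurst_sub_iff.mpr ⟨i * b, fun p hp => ?_⟩
  have hib : i * b ≤ τ := hkb ▸ Nat.mul_le_mul_right b hi
  by_cases hpτ : (p : ℕ) < τ
  · simp only [spliceEnds, hpτ, if_true] at hp
    have := (hf.differsWithin_of_le hi le_rfl).symm p hp
    omega
  · simp only [spliceEnds, hpτ, if_false] at hp
    have := (hf.differsWithin_of_le (Nat.zero_le i) hi) p hp
    omega

theorem not_hasChainTo [AddCommGroup F] {ℓ : ℕ} (hdet : HasBurstDetector C τ)
    (hlist : HasBurstListDecoder C ℓ τ) (hℓb : ℓ * b = τ) (c : Fin n → F) :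
    ¬ HasChainTo C b τ ℓ c := by
  classical
  rintro ⟨f, hf, -⟩
  have hcard := hlist.card_le_s10 (spliceEnds f ℓ τ) (S := (Finset.range (ℓ + 1)).image f)
    (by simpa [Set.subset_def] using fun i hi => hf.mem i (by omega))
    (by simpa using fun i hi => hf.isBurst_spliceEnds_sub hℓb (by omega))
  rw [Finset.card_image_of_injOn (hf.injOn hdet |>.mono fun i hi => by simp at hi ⊢; omega),
    Finset.card_range] at hcard
  omega

end Chains

section Height

variable {F : Type*} {n : ℕ} {C : Set (Fin n → F)} {b τ : ℕ}

theorem hasChainTo_zero {c : Fin n → F} (hc : c ∈ C) : HasChainTo C b τ 0 c :=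
  ⟨fun _ => c, ⟨fun _ _ => hc, fun _ h => absurd h (Nat.not_lt_zero _),
    fun _ h => absurd h (Nat.not_lt_zero _)⟩, rfl⟩

theorem HasChainTo.extend {k : ℕ} {c c' : Fin n → F} (h : HasChainTo C b τ k c) (hc' : c' ∈ C)
    (hne : c ≠ c') (hd : DiffersWithin c c' (k * b) ((k + 1) * b + τ)) :
    HasChainTo C b τ (k + 1) c' := by
  obtain ⟨f, hf, rfl⟩ := h
  have hupd : ∀ i ≤ k, Function.update f (k + 1) c' i = f i := fun i hi =>
    Function.update_of_ne (by omega) _ _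
  refine ⟨Function.update f (k + 1) c', ⟨fun i hi => ?_, fun i hi => ?_, fun i hi => ?_⟩,
    Function.update_self ..⟩
  · rcases Nat.lt_or_eq_of_le hi with hi | rfl
    · rw [hupd i (by omega)]; exact hf.mem i (by omega)
    · rwa [Function.update_self]
  · rcases Nat.lt_or_eq_of_le (Nat.le_of_lt_succ hi) with hi | rfl
    · rw [hupd i (by omega), hupd (i + 1) (by omega)]; exact hf.ne i hi
    · rwa [hupd i le_rfl, Function.update_self]
  · rcases Nat.lt_or_eq_of_le (Nat.le_of_lt_succ hi) with hi | rfl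
    · rw [hupd i (by omega), hupd (i + 1) (by omega)]; exact hf.differsWithin i hi
    · rwa [hupd i le_rfl, Function.update_self]

variable (C b τ) in
open scoped Classical in
noncomputable def chainHeight (L : ℕ) (c : Fin n → F) : ℕ :=
  Nat.findGreatest (HasChainTo C b τ · c) L

theorem hasChainTo_chainHeight {L : ℕ} {c : Fin n → F} (hc : c ∈ C) :
    HasChainTo C b τ (chainHeight C b τ L c) c := by
  classical
  exact Nat.findGreatest_spec (P := (HasChainTo C b τ · c)) (Nat.zero_le L) (hasChainTo_zero hc)

theorem le_chainHeight {L k : ℕ} {c : Fin n → F} (hkL : k ≤ L) (h : HasChainTo C b τ k c) :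
    k ≤ chainHeight C b τ L c := by
  classical
  exact Nat.le_findGreatest hkL h

theorem chainHeight_lt {L : ℕ} {c : Fin n → F} (hc : c ∈ C) (hL : ¬ HasChainTo C b τ L c) :
    chainHeight C b τ L c < L := by
  classical
  refine lt_of_le_of_ne (Nat.findGreatest_le L) fun h => hL ?_
  exact h ▸ hasChainTo_chainHeight hc

end Height

theorem Finset.card_lt_mul_card_of_height {α β : Type*} [Fintype β] [Nonempty β]
    (C : Finset α) (H : α → ℕ) (π : ℕ → α → β) {ℓ : ℕ} (hℓ : 1 < ℓ) (hH : ∀ c ∈ C, H c < ℓ)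
    (hπ : ∀ c ∈ C, ∀ c' ∈ C, c ≠ c' → π (H c) c = π (H c) c' → H c < H c') :
    C.card < ℓ * Fintype.card β := by
  classical
  set S : ℕ → Finset α := fun k => C.filter (H · = k)
  have hmem : ∀ {k c}, c ∈ (S k : Set α) ↔ c ∈ C ∧ H c = k := by simp [S]
  have hinj : ∀ k, Set.InjOn (π k) (S k) := fun k c hc c' hc' heq => by
    rw [hmem] at hc hc'
    by_contra hne
    have := hπ c hc.1 c' hc'.1 hne (hc.2 ▸ heq)
    omega
  have hS : ∀ k, (S k).card ≤ Fintype.card β := fun k =>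
    Finset.card_le_card_of_injOn (π k) (fun _ _ => Finset.mem_coe.2 (Finset.mem_univ _)) (hinj k)
  obtain ⟨k, hk, hlt⟩ : ∃ k < ℓ, (S k).card < Fintype.card β := by
    by_cases hlow : ∃ c₀ ∈ C, H c₀ < ℓ - 1
    · obtain ⟨c₀, hc₀, hc₀ℓ⟩ := hlow
      have hmaps : Set.MapsTo (π (ℓ - 1)) (S (ℓ - 1)) (Finset.univ.erase (π (ℓ - 1) c₀)) := by
        intro c hc
        rw [hmem] at hc
        refine Finset.mem_erase.2 ⟨fun heq => ?_, Finset.mem_univ _⟩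
        have := hπ c hc.1 c₀ hc₀ (by rintro rfl; omega) (hc.2 ▸ heq)
        omega
      have := Finset.card_le_card_of_injOn _ hmaps (hinj (ℓ - 1))
      rw [Finset.card_erase_of_mem (Finset.mem_univ _), Finset.card_univ] at this
      exact ⟨ℓ - 1, by omega, by have := Fintype.card_pos (α := β); omega⟩
    · have : S 0 = ∅ := Finset.filter_eq_empty_iff.2 fun c hc h0 => hlow ⟨c, hc, by omega⟩
      exact ⟨0, by omega, by simp [this, Fintype.card_pos]⟩
  calc C.card = ∑ k ∈ Finset.range ℓ, (S k).card :=
        Finset.card_eq_sum_card_fiberwise fun c hc => Finset.mem_range.2 (hH c hc)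
    _ < ∑ _k ∈ Finset.range ℓ, Fintype.card β :=
        Finset.sum_lt_sum (fun k _ => hS k) ⟨k, Finset.mem_range.2 hk, hlt⟩
    _ = ℓ * Fintype.card β := by simp

theorem generalized_Reiger_general_general (F : Type*) [AddCommGroup F] [Fintype F]
    (n τ ℓ : ℕ)
    (h1a : ℓ ∣ τ) (h1b : 1 < ℓ) (h1c : 2 * τ ≤ n)
    (C : Set (Fin n → F))
    (h2 : HasBurstDetector C τ)
    (h3 : HasBurstListDecoder C ℓ τ) :
    C.ncard < ℓ * Fintype.card F ^ (n - (τ + τ / ℓ)) := by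
  classical
  obtain ⟨b, rfl⟩ := h1a
  have hchain := not_hasChainTo h2 h3 rfl
  rw [Nat.mul_div_cancel_left b (by omega), Set.ncard_eq_toFinset_card',
    ← Fintype.card_fin (n - (ℓ * b + b)), ← Fintype.card_fun]
  refine C.toFinset.card_lt_mul_card_of_height (chainHeight C b (ℓ * b) ℓ)
    (fun k => puncture (k * b) (ℓ * b + b)) h1b
    (fun c hc => chainHeight_lt (Set.mem_toFinset.1 hc) (hchain c)) fun c hc c' hc' hne heq => ?_
  rw [Set.mem_toFinset] at hc hc'
  have hk := chainHeight_lt hc (hchain c)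
  have hwindow : (chainHeight C b (ℓ * b) ℓ c + 1) * b ≤ ℓ * b := Nat.mul_le_mul_right b hk
  rw [Nat.add_one_mul] at hwindow
  have hd := differsWithin_of_puncture_eq (by omega) heq
  exact le_chainHeight hk <| (hasChainTo_chainHeight hc).extend hc' hne <|
    hd.mono le_rfl (by rw [Nat.add_one_mul]; omega)

/-- generalized Reiger bound for general codes.
If a code `C` of length `n` over an alphabet of size `q ≥ 2`, with `ℓ ∣ τ`,
`ℓ > 1`, `2τ ≤ n`, has a decoder detecting any single `τ`-burst error and an
`(ℓ,τ)`-burst list decoder, then `|C| < ℓ · q^{n - (1+1/ℓ)τ}`, i.e. the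
redundancy satisfies `r > (1 + 1/ℓ)τ - log_q ℓ`. -/
theorem generalized_Reiger_general (F : Type*) [AddCommGroup F] [Fintype F]
    (n τ ℓ : ℕ) (hq : 2 ≤ Fintype.card F) (hτ : 1 ≤ τ)
    (h1a : ℓ ∣ τ) (h1b : 1 < ℓ) (h1c : 2 * τ ≤ n)
    (C : Set (Fin n → F))
    (h2 : HasBurstDetector C τ)
    (h3 : HasBurstListDecoder C ℓ τ) :
    C.ncard < ℓ * Fintype.card F ^ (n - (τ + τ / ℓ)) :=
  generalized_Reiger_general_general F n τ ℓ h1a h1b h1c C h2 h3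
end
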